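/- arXiv:2508.05180 — 4 statements merged into one kernel-verified Lean document; each statement's English description precedes it below -/
import Mathlib

section
/- Let G be a finite group, let p be a prime, and let P be a Sylow p-subgroup of G. Assume that x, y ∈ P are picky. If x and y are conjugate in G, then x and y are conjugate in the normalizer N_G(P). -/
open CategoryTheory

noncomputable section

/-- The set of irreducible complex characters of a group `G`. -/
def Irr (G : Type) [Group G] : Set (G → ℂ) :=
  {χ | ∃ V : FDRep ℂ G, Simple V ∧ V.character = χ}

/-- The irreducible characters of `G` that do not vanish at `g`. -/
def IrrX (G : Type) [Group G] (g : G) : Set (G → ℂ) :=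
  {χ | χ ∈ Irr G ∧ χ g ≠ 0}

/-- The irreducible characters of `G` of degree not divisible by `p`. -/
def IrrP' (p : ℕ) (G : Type) [Group G] : Set (G → ℂ) :=
  {χ | ∃ V : FDRep ℂ G, Simple V ∧ V.character = χ ∧ ¬ (p ∣ Module.finrank ℂ V)}

/-- The degree of a character, recovered from its value at `1`. -/
def charDeg {G : Type} [Group G] (χ : G → ℂ) : ℕ := ⌊(χ 1).re⌋₊

/-- The `p`-part of a natural number. -/
def pPart (p m : ℕ) : ℕ := p ^ (m.factorization p)

/-- `x` is a picky `p`-element: a `p`-element lying in a unique Sylow `p`-subgroup. -/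
def IsPicky (p : ℕ) {G : Type*} [Group G] (x : G) : Prop :=
  (∃ k, orderOf x = p ^ k) ∧ ∃! Q : Sylow p G, x ∈ Q

/-- `H` is a normal subgroup of `K` (both subgroups of an ambient group `G`). -/
def NormalIn {G : Type*} [Group G] (H K : Subgroup G) : Prop :=
  H ≤ K ∧ ∀ k ∈ K, ∀ h ∈ H, k * h * k⁻¹ ∈ H

/-- `H` is subnormal in `K`: there is a finite chain of subgroups from `H` to `K`,
each normal in the next. -/
def IsSubnormalIn {G : Type*} [Group G] (H K : Subgroup G) : Prop :=
  Relation.ReflTransGen NormalIn H K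

/-- The subnormalizer of `x` in `G`: the subgroup generated by all `g` such that
`⟨x⟩` is subnormal in `⟨x, g⟩`. -/
def subnormalizer {G : Type*} [Group G] (x : G) : Subgroup G :=
  Subgroup.closure {g | IsSubnormalIn (Subgroup.zpowers x) (Subgroup.closure {x, g})}

lemma mem_subnormalizer_self {G : Type*} [Group G] (x : G) : x ∈ subnormalizer x :=
  Subgroup.subset_closure (by
    show IsSubnormalIn (Subgroup.zpowers x) (Subgroup.closure {x, x})
    rw [Set.pair_eq_singleton, ← Subgroup.zpowers_eq_closure]
    exact Relation.ReflTransGen.refl)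

/-- The full cycle type of a permutation of `Fin n`: the multiset of the lengths of
all its cycles, with fixed points counted as cycles of length `1`. -/
def fullCycleType {n : ℕ} (x : Equiv.Perm (Fin n)) : Multiset ℕ :=
  x.cycleType + Multiset.replicate (n - x.support.card) 1

/-- The multiset of cycle lengths of a `p`-adic element of `S_n`: `a_i` cycles of
length `p ^ i`, where `n = Σ a_i p ^ i` is the `p`-adic expansion of `n`. -/
def padicCycleMultiset (p n : ℕ) : Multiset ℕ :=
  ∑ i ∈ Finset.range (Nat.digits p n).length,
    Multiset.replicate ((Nat.digits p n).getD i 0) (p ^ i)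

/-- A `p`-adic element of `S_n`. -/
def IsPAdic (p : ℕ) {n : ℕ} (x : Equiv.Perm (Fin n)) : Prop :=
  fullCycleType x = padicCycleMultiset p n

/-- A picky element of Type II: a `2`-adic element on `n - 2` points together with
two fixed points. -/
def IsTypeII {n : ℕ} (x : Equiv.Perm (Fin n)) : Prop :=
  fullCycleType x = padicCycleMultiset 2 (n - 2) + Multiset.replicate 2 1

/-- A picky element of Type III: a `3`-adic element on `n - 3` points together with
three fixed points. -/
def IsTypeIII {n : ℕ} (x : Equiv.Perm (Fin n)) : Prop :=
  fullCycleType x = padicCycleMultiset 3 (n - 3) + Multiset.replicate 3 1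

namespace Sylow

variable {p : ℕ} {G : Type*} [Group G]

theorem conj_mem_smul {P : Sylow p G} {x : G} (g : G) (hx : x ∈ P) : g * x * g⁻¹ ∈ g • P := by
  rw [← SetLike.mem_coe, coe_smul]
  exact Set.smul_mem_smul_set hx

theorem mem_normalizer_of_existsUnique_mem {P : Sylow p G} {y g : G}
    (huniq : ∃! Q : Sylow p G, y ∈ Q) (hP : y ∈ P) (hgP : y ∈ g • P) :
    g ∈ Subgroup.normalizer (P : Set G) :=
  smul_eq_iff_mem_normalizer.mp (huniq.unique hgP hP)

end Sylow

theorem conj_in_normalizer_of_picky_general {G : Type*} [Group G]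
    (p : ℕ) (P : Sylow p G) (x y : G)
    (hx : x ∈ (P : Subgroup G)) (hy : y ∈ (P : Subgroup G))
    (hpy : IsPicky p y) (hconj : IsConj x y) :
    ∃ n ∈ Subgroup.normalizer ((P : Subgroup G) : Set G), n * x * n⁻¹ = y := by
  obtain ⟨g, rfl⟩ := isConj_iff.mp hconj
  exact ⟨g, Sylow.mem_normalizer_of_existsUnique_mem hpy.2 hy (Sylow.conj_mem_smul g hx), rfl⟩

/-- Lemma: picky elements of `P` that are conjugate in `G` are already conjugate in
`N_G(P)`. -/
theorem conj_in_normalizer_of_picky {G : Type*} [Group G] [Finite G]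
    (p : ℕ) [Fact p.Prime] (P : Sylow p G) (x y : G)
    (hx : x ∈ (P : Subgroup G)) (hy : y ∈ (P : Subgroup G))
    (hpx : IsPicky p x) (hpy : IsPicky p y) (hconj : IsConj x y) :
    ∃ n ∈ Subgroup.normalizer ((P : Subgroup G) : Set G), n * x * n⁻¹ = y :=
  conj_in_normalizer_of_picky_general p P x y hx hy hpy hconj

end
end

section
/- Let p be a prime and let G = H_1 × ⋯ × H_r be a direct product of finite groups. Then a p-element g = (g_1, …, g_r) ∈ G is picky in G if and only if for every i the component g_i is picky in H_i. -/
open CategoryTheory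

noncomputable section

/-!
The Sylow `p`-subgroups of a direct product of finitely many groups are exactly the products
`∏ Qᵢ` of Sylow `p`-subgroups of the factors, each coming from a unique family `(Qᵢ)`: a Sylow
subgroup `P` lies in the product of Sylow subgroups containing its projections, and `∏ Qᵢ` is
maximal because any larger `p`-subgroup projects onto a `p`-subgroup containing each `Qᵢ`.
As `g ∈ ∏ Qᵢ` iff `gᵢ ∈ Qᵢ` for all `i`, the Sylow subgroup containing `g` is unique iff the
one containing `gᵢ` is for every `i`; and `g` is a `p`-element iff all its components are,
finitely many `p`-power orders having a common `p`-power multiple.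
-/

theorem existsUnique_pi_iff {ι : Type*} {α : ι → Type*} {q : ∀ i, α i → Prop} :
    (∃! f : ∀ i, α i, ∀ i, q i (f i)) ↔ ∀ i, ∃! a, q i a := by
  classical
  constructor
  · rintro ⟨f, hf, hf_unique⟩ i
    refine ⟨f i, hf i, fun a ha => ?_⟩
    have hupdate : ∀ j, q j (Function.update f i a j) := by
      intro j
      rcases eq_or_ne j i with rfl | hji
      · simpa using ha
      · simpa [Function.update_of_ne hji] using hf j
    simpa using congrFun (hf_unique _ hupdate) i
  · intro h
    choose f hf hf_unique using h
    exact ⟨f, hf, fun f' hf' => funext fun i => hf_unique i _ (hf' i)⟩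

namespace Pi

variable {ι : Type*} [Finite ι] {H : ι → Type*} [∀ i, Monoid (H i)] {p : ℕ}

theorem exists_pow_pow_eq_one_iff (g : ∀ i, H i) :
    (∃ k, g ^ p ^ k = 1) ↔ ∀ i, ∃ k, g i ^ p ^ k = 1 := by
  refine ⟨fun ⟨k, hk⟩ i => ⟨k, congrFun hk i⟩, fun h => ?_⟩
  choose k hk using h
  have := Fintype.ofFinite ι
  refine ⟨Finset.univ.sup k, funext fun i => ?_⟩
  obtain ⟨c, hc⟩ := pow_dvd_pow p (Finset.le_sup (Finset.mem_univ i) : k i ≤ _)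
  rw [Pi.pow_apply, hc, pow_mul, hk i, one_pow, Pi.one_apply]

theorem exists_orderOf_eq_prime_pow_iff [Fact p.Prime] (g : ∀ i, H i) :
    (∃ k, orderOf g = p ^ k) ↔ ∀ i, ∃ k, orderOf (g i) = p ^ k := by
  simp only [_root_.exists_orderOf_eq_prime_pow_iff, exists_pow_pow_eq_one_iff]

end Pi

section SylowPi

variable {p : ℕ} {ι : Type*} {H : ι → Type*} [∀ i, Group (H i)]

theorem IsPGroup.pi [Finite ι] {Q : ∀ i, Subgroup (H i)} (hQ : ∀ i, IsPGroup p (Q i)) :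
    IsPGroup p (Subgroup.pi Set.univ Q) := by
  rintro ⟨g, hg⟩
  obtain ⟨k, hk⟩ := (Pi.exists_pow_pow_eq_one_iff g).2 fun i => by
    obtain ⟨k, hk⟩ := hQ i ⟨g i, hg i (Set.mem_univ i)⟩
    exact ⟨k, congrArg Subtype.val hk⟩
  exact ⟨k, Subtype.ext hk⟩

theorem Subgroup.eq_pi_of_isPGroup_of_le {Q : ∀ i, Sylow p (H i)} {R : Subgroup (∀ i, H i)}
    (hR : IsPGroup p R) (hle : Subgroup.pi Set.univ (fun i => (Q i : Subgroup (H i))) ≤ R) :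
    R = Subgroup.pi Set.univ fun i => (Q i : Subgroup (H i)) := by
  classical
  have hmap : ∀ i, R.map (Pi.evalMonoidHom H i) = Q i := fun i =>
    (Q i).is_maximal' (hR.map _) fun x hx =>
      ⟨Pi.mulSingle i x, hle ((Subgroup.mulSingle_mem_pi i x).2 fun _ => hx), by simp⟩
  refine le_antisymm (fun x hx i _ => ?_) hle
  change x i ∈ (Q i : Subgroup (H i))
  rw [← hmap i]
  exact ⟨x, hx, rfl⟩

variable [Finite ι]

def Sylow.pi (Q : ∀ i, Sylow p (H i)) : Sylow p (∀ i, H i) where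
  toSubgroup := Subgroup.pi Set.univ fun i => (Q i : Subgroup (H i))
  isPGroup' := IsPGroup.pi fun i => (Q i).isPGroup'
  is_maximal' hR hle := Subgroup.eq_pi_of_isPGroup_of_le hR hle

namespace Sylow

theorem mem_pi {Q : ∀ i, Sylow p (H i)} {g : ∀ i, H i} : g ∈ Sylow.pi Q ↔ ∀ i, g i ∈ Q i :=
  ⟨fun h i => h i (Set.mem_univ i), fun h i _ => h i⟩

theorem pi_injective : Function.Injective (Sylow.pi : (∀ i, Sylow p (H i)) → _) := by
  classical
  intro Q Q' h
  funext i
  ext x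
  have hmem := SetLike.ext_iff.1 (congrArg Sylow.toSubgroup h) (Pi.mulSingle i x)
  simpa only [Sylow.pi, Subgroup.mulSingle_mem_pi, Set.mem_univ, true_imp_iff] using hmem

theorem pi_surjective : Function.Surjective (Sylow.pi : (∀ i, Sylow p (H i)) → _) := by
  intro P
  choose Q hQ using fun i => (P.isPGroup'.map (Pi.evalMonoidHom H i)).exists_le_sylow
  exact ⟨Q, Sylow.ext (P.is_maximal' (Sylow.pi Q).isPGroup' fun x hx i _ => hQ i ⟨x, hx, rfl⟩)⟩

theorem pi_bijective : Function.Bijective (Sylow.pi : (∀ i, Sylow p (H i)) → _) :=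
  ⟨pi_injective, pi_surjective⟩

end Sylow

end SylowPi

theorem picky_pi_iff_general (p : ℕ) [Fact p.Prime] (r : ℕ) (H : Fin r → Type*)
    [∀ i, Group (H i)] (g : ∀ i, H i) :
    IsPicky p g ↔ ∀ i, IsPicky p (g i) := by
  simp only [IsPicky, forall_and]
  refine and_congr (Pi.exists_orderOf_eq_prime_pow_iff g) ?_
  rw [Sylow.pi_bijective.existsUnique_iff]
  simp only [Sylow.mem_pi]
  exact existsUnique_pi_iff (q := fun i Q => g i ∈ Q)

/-- A `p`-element of a direct product `G = H_1 × ⋯ × H_r` is picky if and only if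
each of its components is picky. -/
theorem picky_pi_iff (p : ℕ) [Fact p.Prime] (r : ℕ) (H : Fin r → Type*)
    [∀ i, Group (H i)] [∀ i, Finite (H i)]
    (g : ∀ i, H i) (hg : ∃ k, orderOf g = p ^ k) :
    IsPicky p g ↔ ∀ i, IsPicky p (g i) :=
  picky_pi_iff_general p r H g
end
end

section
/- Let G = H × K be a direct product of finite groups, let x ∈ H and y ∈ K. Then Sub_H(x) × Sub_K(y) ≤ Sub_G((x, y)), i.e., the direct product of the two subnormalizers, viewed as a subgroup of H × K, is contained in the subnormalizer of (x, y) in G. -/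
open CategoryTheory

noncomputable section

/- Let `⟨x⟩` be subnormal in `⟨x, g⟩` and `⟨y⟩` in `⟨y, h⟩`, and put `L = ⟨(x, y), (g, h)⟩`.
Multiplying the two subnormal chains and intersecting with `L` gives a subnormal chain from
`M = L ⊓ (⟨x⟩ × ⟨y⟩)` to `L ⊓ (⟨x, g⟩ × ⟨y, h⟩) = L`, and `⟨(x, y)⟩` is normal in `M` because `M`
is abelian. So `(g, h)` is one of the generators of `Sub((x, y))`; since both generating sets
contain `1`, such pairs generate `Sub(x) × Sub(y)`. -/

section

variable {G N : Type*} [Group G] [Group N]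

theorem NormalIn.refl (A : Subgroup G) : NormalIn A A :=
  ⟨le_rfl, fun _ hk _ hh => A.mul_mem (A.mul_mem hk hh) (A.inv_mem hk)⟩

theorem NormalIn.prod {A B : Subgroup G} {C D : Subgroup N} (hAB : NormalIn A B)
    (hCD : NormalIn C D) : NormalIn (A.prod C) (B.prod D) :=
  ⟨Subgroup.prod_mono hAB.1 hCD.1, fun k hk h hh =>
    ⟨hAB.2 k.1 hk.1 h.1 hh.1, hCD.2 k.2 hk.2 h.2 hh.2⟩⟩

theorem NormalIn.inf_left (L : Subgroup G) {A B : Subgroup G} (hAB : NormalIn A B) :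
    NormalIn (L ⊓ A) (L ⊓ B) :=
  ⟨inf_le_inf_left L hAB.1, fun k hk h hh =>
    ⟨L.mul_mem (L.mul_mem hk.1 hh.1) (L.inv_mem hk.1), hAB.2 k hk.2 h hh.2⟩⟩

theorem normalIn_of_le_of_commute {A B : Subgroup G} (hAB : A ≤ B)
    (hB : ∀ a ∈ B, ∀ b ∈ B, Commute a b) : NormalIn A B :=
  ⟨hAB, fun k hk h hh => by rwa [(hB k hk h (hAB hh)).eq, mul_inv_cancel_right]⟩

theorem IsSubnormalIn.prod {A B : Subgroup G} {C D : Subgroup N} (hAB : IsSubnormalIn A B)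
    (hCD : IsSubnormalIn C D) : IsSubnormalIn (A.prod C) (B.prod D) :=
  Relation.ReflTransGen.trans (hAB.lift (·.prod C) fun _ _ h => h.prod (.refl C))
    (hCD.lift (B.prod ·) fun _ _ h => (NormalIn.refl B).prod h)

theorem IsSubnormalIn.inf_left (L : Subgroup G) {A B : Subgroup G} (hAB : IsSubnormalIn A B) :
    IsSubnormalIn (L ⊓ A) (L ⊓ B) :=
  hAB.lift (L ⊓ ·) fun _ _ h => h.inf_left L

theorem isSubnormalIn_zpowers_closure_pair_one (x : G) :
    IsSubnormalIn (Subgroup.zpowers x) (Subgroup.closure {x, 1}) := by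
  rw [Set.pair_comm, Subgroup.closure_insert_one, ← Subgroup.zpowers_eq_closure]
  exact .refl

theorem isSubnormalIn_zpowers_prod {x g : G} {y h : N}
    (hg : IsSubnormalIn (Subgroup.zpowers x) (Subgroup.closure {x, g}))
    (hh : IsSubnormalIn (Subgroup.zpowers y) (Subgroup.closure {y, h})) :
    IsSubnormalIn (Subgroup.zpowers (x, y)) (Subgroup.closure {(x, y), (g, h)}) := by
  set L := Subgroup.closure {(x, y), (g, h)}
  have hL : L ≤ (Subgroup.closure {x, g}).prod (Subgroup.closure {y, h}) := by
    rw [Subgroup.closure_le, Set.insert_subset_iff, Set.singleton_subset_iff]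
    exact ⟨⟨Subgroup.subset_closure (by simp), Subgroup.subset_closure (by simp)⟩,
      ⟨Subgroup.subset_closure (by simp), Subgroup.subset_closure (by simp)⟩⟩
  have hchain : IsSubnormalIn (L ⊓ (Subgroup.zpowers x).prod (Subgroup.zpowers y)) L := by
    simpa only [inf_eq_left.2 hL] using (hg.prod hh).inf_left L
  refine .head (normalIn_of_le_of_commute ?_ ?_) hchain
  · exact Subgroup.zpowers_le.2
      ⟨Subgroup.subset_closure (by simp), Subgroup.mem_zpowers x, Subgroup.mem_zpowers y⟩
  · rintro a ⟨-, ⟨m, hm⟩, ⟨n, hn⟩⟩ b ⟨-, ⟨m', hm'⟩, ⟨n', hn'⟩⟩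
    rw [Prod.commute_iff, ← hm, ← hn, ← hm', ← hn']
    exact ⟨Commute.zpow_zpow_self x m m', Commute.zpow_zpow_self y n n'⟩

end

theorem subnormalizer_prod_le_general {H K : Type*} [Group H] [Group K]
    (x : H) (y : K) :
    (subnormalizer x).prod (subnormalizer y) ≤ subnormalizer (x, y) := by
  rw [subnormalizer, subnormalizer, ← Subgroup.closure_prod
    (isSubnormalIn_zpowers_closure_pair_one x) (isSubnormalIn_zpowers_closure_pair_one y)]
  exact Subgroup.closure_mono fun _ ⟨hg, hh⟩ => isSubnormalIn_zpowers_prod hg hh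

/-- `Sub_H(x) × Sub_K(y) ≤ Sub_{H × K}((x, y))`. -/
theorem subnormalizer_prod_le {H K : Type*} [Group H] [Group K] [Finite H] [Finite K]
    (x : H) (y : K) :
    (subnormalizer x).prod (subnormalizer y) ≤ subnormalizer (x, y) :=
  subnormalizer_prod_le_general x y

end
end

section
/- Let p be a prime, let n be a positive integer, let x ∈ S_n be a picky p-element, and let P be the unique Sylow p-subgroup of S_n containing x. If H = S_n or H = N_{S_n}(P), then χ(x) is a rational integer for every χ ∈ Irr(H). -/
open CategoryTheory

noncomputable section

/-!
A permutation `σ` is conjugate to every power `σ ^ k` with `k` coprime to its order, since both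
have the same cycle type. If `x` lies in a unique Sylow `p`-subgroup `P`, a conjugator carrying
`x` to such a power `x ^ k` carries `P` to a Sylow subgroup containing `x ^ k`, hence `x`; so it
normalizes `P`, and `x` is conjugate to its generating powers in `N(P)` as well.

For such an element `g` of order `m` and any character, `t = χ(g) = ∑ d_μ μ` over the
eigenvalues `μ`, which are `m`-th roots of unity. Averaging over the generating powers gives
`φ(m) t = ∑ d_μ c_m(μ)` with the Ramanujan sums `c_m(μ) = ∑_{(k, m) = 1} μ ^ k`, which are
integers by Möbius inversion. So `t` is a rational algebraic integer, i.e. an integer.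
-/

open Finset Module

section RamanujanSum

variable {R : Type*} [CommRing R]

theorem sum_range_filter_dvd_pow (ζ : R) {d m : ℕ} (hd : d ≠ 0) (hdm : d ∣ m) :
    ∑ k ∈ range m with d ∣ k, ζ ^ k = ∑ j ∈ range (m / d), (ζ ^ d) ^ j := by
  obtain ⟨e, rfl⟩ := hdm
  have hmap : {k ∈ range (d * e) | d ∣ k} = (range e).map ⟨(d * ·), mul_right_injective₀ hd⟩ := by
    ext k
    simp only [mem_filter, mem_range, mem_map, Function.Embedding.coeFn_mk]
    constructor
    · rintro ⟨hk, j, rfl⟩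
      exact ⟨j, lt_of_mul_lt_mul_left' hk, rfl⟩
    · rintro ⟨j, hj, rfl⟩
      exact ⟨by gcongr, dvd_mul_right d j⟩
  simp [hmap, pow_mul, Nat.mul_div_cancel_left e (Nat.pos_of_ne_zero hd)]

theorem exists_int_geom_sum_eq_of_pow_eq_one [IsDomain R] {ω : R} {n : ℕ} (hω : ω ^ n = 1) :
    ∃ z : ℤ, ∑ j ∈ range n, ω ^ j = z := by
  by_cases h1 : ω = 1
  · exact ⟨n, by simp [h1]⟩
  · refine ⟨0, ?_⟩
    have : (∑ j ∈ range n, ω ^ j) * (ω - 1) = 0 := by rw [geom_sum_mul, hω, sub_self]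
    simpa [sub_eq_zero, h1] using this

theorem Nat.sum_moebius_divisors_filter_dvd {m : ℕ} (hm : m ≠ 0) (k : ℕ) :
    ∑ d ∈ m.divisors with d ∣ k, ArithmeticFunction.moebius d = if m.Coprime k then 1 else 0 := by
  have hgcd : {d ∈ m.divisors | d ∣ k} = (m.gcd k).divisors := by
    ext d
    simp [Nat.dvd_gcd_iff, hm, and_comm]
  rw [hgcd, ← ArithmeticFunction.coe_mul_zeta_apply, ArithmeticFunction.moebius_mul_coe_zeta,
    ArithmeticFunction.one_apply]

theorem exists_int_sum_coprime_pow_eq [IsDomain R] {ζ : R} {m : ℕ} (hm : m ≠ 0) (hζ : ζ ^ m = 1) :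
    ∃ z : ℤ, ∑ k ∈ range m with m.Coprime k, ζ ^ k = z := by
  have hsum : ∑ k ∈ range m with m.Coprime k, ζ ^ k =
      ∑ d ∈ m.divisors, ArithmeticFunction.moebius d • ∑ k ∈ range m with d ∣ k, ζ ^ k := by
    simp_rw [sum_filter _ (fun k => ζ ^ k), smul_sum, smul_ite, smul_zero]
    rw [sum_comm]
    refine sum_congr rfl fun k _ => ?_
    rw [← sum_filter, ← sum_smul, Nat.sum_moebius_divisors_filter_dvd hm, ite_smul, one_smul,
      zero_smul]
  suffices hmem : ∑ k ∈ range m with m.Coprime k, ζ ^ k ∈ (Int.castRingHom R).range by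
    obtain ⟨z, hz⟩ := hmem
    exact ⟨z, hz.symm⟩
  rw [hsum]
  refine sum_mem fun d hd => zsmul_mem ?_ _
  obtain ⟨hdm, -⟩ := Nat.mem_divisors.mp hd
  rw [sum_range_filter_dvd_pow ζ (Nat.pos_of_mem_divisors hd).ne' hdm]
  obtain ⟨z, hz⟩ := exists_int_geom_sum_eq_of_pow_eq_one (n := m / d) (ω := ζ ^ d)
    (by rw [← pow_mul, Nat.mul_div_cancel' hdm, hζ])
  exact ⟨z, hz.symm⟩

end RamanujanSum

theorem exists_int_eq_of_isIntegral_ratCast {K : Type*} [Field K] [CharZero K] {q : ℚ}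
    (hq : IsIntegral ℤ (q : K)) : ∃ z : ℤ, (q : K) = z := by
  rw [← eq_ratCast (algebraMap ℚ K), isIntegral_algebraMap_iff (algebraMap ℚ K).injective] at hq
  obtain ⟨z, rfl⟩ := IsIntegrallyClosed.isIntegral_iff.mp hq
  exact ⟨z, by simp⟩

section Trace

variable {K V : Type*} [Field K] [AddCommGroup V] [Module K V] [FiniteDimensional K V]

theorem Module.End.trace_restrict_pow_maxGenEigenspace (f : End K V) (μ : K) (k : ℕ)
    (hk : Set.MapsTo (f ^ k) (f.maxGenEigenspace μ) (f.maxGenEigenspace μ)) :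
    LinearMap.trace K _ ((f ^ k).restrict hk) = finrank K (f.maxGenEigenspace μ) * μ ^ k := by
  have hf := f.mapsTo_maxGenEigenspace_of_comm (Commute.refl f) μ
  rw [← Module.End.pow_restrict k hf]
  have hnil : IsNilpotent (f.restrict hf - algebraMap K _ μ) := by
    convert f.isNilpotent_restrict_maxGenEigenspace_sub_algebraMap μ
    ext
    rfl
  induction k with
  | zero => simp
  | succ k ih =>
    rw [pow_succ, Module.End.mul_eq_comp,
      LinearMap.trace_comp_eq_mul_of_commute_of_isNilpotent μ ((Commute.refl _).pow_left k) hnil,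
      ih (Module.End.pow_apply_mem_of_forall_mem k hf)]
    ring

theorem Module.End.exists_trace_pow_eq_sum [IsAlgClosed K] (f : End K V) :
    ∃ (s : Finset K) (d : K → ℕ), (∀ μ ∈ s, f.HasEigenvalue μ) ∧
      ∀ k : ℕ, LinearMap.trace K V (f ^ k) = ∑ μ ∈ s, d μ * μ ^ k := by
  classical
  have hfin : {μ | f.maxGenEigenspace μ ≠ ⊥}.Finite :=
    WellFoundedGT.finite_ne_bot_of_iSupIndep f.independent_maxGenEigenspace
  have hint : DirectSum.IsInternal f.maxGenEigenspace :=
    DirectSum.isInternal_submodule_of_iSupIndep_of_iSup_eq_top f.independent_maxGenEigenspace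
      f.iSup_maxGenEigenspace_eq_top
  refine ⟨hfin.toFinset, fun μ => finrank K (f.maxGenEigenspace μ), fun μ hμ => ?_, fun k => ?_⟩
  · exact HasUnifEigenvalue.lt zero_lt_one (hfin.mem_toFinset.mp hμ)
  · rw [LinearMap.trace_eq_sum_trace_restrict' hint hfin
      (fun μ => f.mapsTo_maxGenEigenspace_of_comm ((Commute.refl f).pow_right k) μ)]
    exact sum_congr rfl fun μ _ => f.trace_restrict_pow_maxGenEigenspace μ k _

theorem Module.End.exists_int_trace_eq_of_pow_eq_one [IsAlgClosed K] [CharZero K] {f : End K V}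
    {m : ℕ} (hm : m ≠ 0) (hf : f ^ m = 1)
    (htr : ∀ k, m.Coprime k → LinearMap.trace K V (f ^ k) = LinearMap.trace K V f) :
    ∃ z : ℤ, LinearMap.trace K V f = z := by
  obtain ⟨s, d, hs, hpow⟩ := f.exists_trace_pow_eq_sum
  have hroot : ∀ μ ∈ s, μ ^ m = 1 := fun μ hμ => by
    obtain ⟨v, hv⟩ := ((hs μ hμ).pow m).exists_hasEigenvector
    rw [hf] at hv
    exact smul_left_injective K hv.2 (by simpa using hv.apply_eq_smul.symm)
  set t := LinearMap.trace K V f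
  have htotient : (m.totient : K) * t = ∑ μ ∈ s, d μ * ∑ k ∈ range m with m.Coprime k, μ ^ k := by
    calc (m.totient : K) * t = ∑ k ∈ range m with m.Coprime k, LinearMap.trace K V (f ^ k) := by
          rw [sum_congr rfl fun k hk => htr k (mem_filter.mp hk).2, sum_const, nsmul_eq_mul,
            Nat.totient]
      _ = _ := by simp_rw [hpow, mul_sum]; exact sum_comm
  have hrat : ∃ q : ℚ, t = q := by
    have hmem : ∑ μ ∈ s, (d μ : K) * ∑ k ∈ range m with m.Coprime k, μ ^ k ∈
        (Int.castRingHom K).range := by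
      refine sum_mem fun μ hμ => mul_mem (natCast_mem _ _) ?_
      obtain ⟨z, hz⟩ := exists_int_sum_coprime_pow_eq hm (hroot μ hμ)
      exact ⟨z, hz.symm⟩
    obtain ⟨z, hz⟩ := hmem
    have htot : (m.totient : K) ≠ 0 := by
      exact_mod_cast (Nat.totient_pos.mpr (Nat.pos_of_ne_zero hm)).ne'
    exact ⟨z / m.totient, by push_cast; rw [eq_div_iff htot, mul_comm, htotient]; exact hz.symm⟩
  have hint : IsIntegral ℤ t := by
    have ht : t = ∑ μ ∈ s, d μ * μ := by simpa using hpow 1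
    rw [ht]
    refine IsIntegral.sum _ fun μ hμ => (isIntegral_natCast _).mul (IsIntegral.of_pow
      (Nat.pos_of_ne_zero hm) ?_)
    rw [hroot μ hμ]
    exact isIntegral_one
  obtain ⟨q, hq⟩ := hrat
  rw [hq] at hint ⊢
  exact exists_int_eq_of_isIntegral_ratCast hint

end Trace

open Subgroup
open scoped Pointwise

def IsRationalElement {G : Type*} [Monoid G] (g : G) : Prop :=
  ∀ k : ℕ, (orderOf g).Coprime k → IsConj g (g ^ k)

namespace Equiv.Perm

variable {α : Type*} [Fintype α] [DecidableEq α]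

theorem cycleType_pow_of_coprime (σ : Perm α) {k : ℕ} (hk : (orderOf σ).Coprime k) :
    (σ ^ k).cycleType = σ.cycleType := by
  induction σ using cycle_induction_on with
  | base_one => simp
  | base_cycles σ hσ =>
    have hcyc : (σ ^ k).IsCycle := hσ.pow_iff.mpr hk.symm
    have hndvd : ¬orderOf σ ∣ k := fun hdvd =>
      hσ.two_le_card_support.not_gt (by
        rw [← hσ.orderOf, Nat.Coprime.eq_one_of_dvd hk hdvd]; norm_num)
    rw [hcyc.cycleType, hσ.support_pow_eq_iff.mpr hndvd, hσ.cycleType]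
  | induction_disjoint σ τ hd _ hσ hτ =>
    rw [hd.orderOf] at hk
    have hkσ := Nat.Coprime.coprime_dvd_left (Nat.dvd_lcm_left _ _) hk
    have hkτ := Nat.Coprime.coprime_dvd_left (Nat.dvd_lcm_right _ _) hk
    have hdk : (σ ^ k).Disjoint (τ ^ k) := hd.mono (support_pow_le σ k) (support_pow_le τ k)
    rw [hd.commute.mul_pow, hdk.cycleType_mul, hσ hkσ, hτ hkτ, hd.cycleType_mul]

theorem isRationalElement (σ : Perm α) : IsRationalElement σ := fun _ hk =>
  isConj_iff_cycleType_eq.mpr (cycleType_pow_of_coprime σ hk).symm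

end Equiv.Perm

theorem Sylow.mem_normalizer_of_mem_zpowers_conj {G : Type*} [Group G] {p : ℕ} {P : Sylow p G}
    {x g : G} (hP : ∀ Q : Sylow p G, x ∈ Q → Q = P) (hx : x ∈ P)
    (hxg : x ∈ zpowers (g * x * g⁻¹)) : g ∈ normalizer (P : Set G) := by
  have hconj : g * x * g⁻¹ ∈ (g • P : Sylow p G) := by
    show _ ∈ MulAut.conj g • (P : Subgroup G)
    exact smul_mem_pointwise_smul x (MulAut.conj g) _ hx
  exact Sylow.smul_eq_iff_mem_normalizer.mp (hP _ ((zpowers_le.mpr hconj) hxg))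

theorem IsRationalElement.mk_normalizer_sylow {G : Type*} [Group G] {p : ℕ} {P : Sylow p G}
    {x : G} (hrat : IsRationalElement x) (hP : ∀ Q : Sylow p G, x ∈ Q → Q = P) (hx : x ∈ P) :
    IsRationalElement (⟨x, le_normalizer hx⟩ : normalizer (P : Set G)) := by
  intro k hk
  rw [orderOf_mk] at hk
  obtain ⟨g, hg⟩ := isConj_iff.mp (hrat k hk)
  obtain ⟨l, hl⟩ := exists_pow_eq_self_of_coprime hk.symm
  have hxk : x ∈ zpowers (g * x * g⁻¹) := by simpa only [hg, hl] using npow_mem_zpowers (x ^ k) l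
  have hgN : g ∈ normalizer (P : Set G) := Sylow.mem_normalizer_of_mem_zpowers_conj hP hx hxk
  exact isConj_iff.mpr ⟨⟨g, hgN⟩, Subtype.ext hg⟩

theorem FDRep.exists_int_character_eq_of_isRationalElement {K G : Type*} [Field K] [IsAlgClosed K]
    [CharZero K] [Group G] (V : FDRep K G) {g : G} (hfin : IsOfFinOrder g)
    (hg : IsRationalElement g) : ∃ z : ℤ, V.character g = z := by
  refine Module.End.exists_int_trace_eq_of_pow_eq_one hfin.orderOf_pos.ne'
    (by rw [← map_pow, pow_orderOf_eq_one, map_one]) fun k hk => ?_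
  obtain ⟨c, hc⟩ := isConj_iff.mp (hg k hk)
  rw [← map_pow, ← hc]
  exact V.char_conj g c

theorem int_valued_at_picky_general (p : ℕ) (n : ℕ)
    (x : Equiv.Perm (Fin n)) (hpicky : IsPicky p x)
    (P : Sylow p (Equiv.Perm (Fin n))) (hx : x ∈ (P : Subgroup (Equiv.Perm (Fin n)))) :
    (∀ χ ∈ Irr (Equiv.Perm (Fin n)), ∃ m : ℤ, χ x = (m : ℂ)) ∧
    (∀ ψ ∈ Irr ↥(Subgroup.normalizer ((P : Subgroup (Equiv.Perm (Fin n))) : Set (Equiv.Perm (Fin n)))),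
      ∃ m : ℤ, ψ ⟨x, Subgroup.le_normalizer hx⟩ = (m : ℂ)) := by
  have hP : ∀ Q : Sylow p (Equiv.Perm (Fin n)), x ∈ Q → Q = P :=
    fun Q hQ => hpicky.2.unique hQ hx
  refine ⟨?_, ?_⟩
  · rintro χ ⟨V, -, rfl⟩
    exact V.exists_int_character_eq_of_isRationalElement (isOfFinOrder_of_finite x)
      x.isRationalElement
  · rintro ψ ⟨V, -, rfl⟩
    exact V.exists_int_character_eq_of_isRationalElement (isOfFinOrder_of_finite _)
      (x.isRationalElement.mk_normalizer_sylow hP hx)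

/-- If `x` is a picky `p`-element of `S_n` with unique Sylow `p`-subgroup `P`, then
all irreducible characters of `S_n` and of `N_{S_n}(P)` take integer values at `x`. -/
theorem int_valued_at_picky (p : ℕ) [Fact p.Prime] (n : ℕ) (hn : 1 ≤ n)
    (x : Equiv.Perm (Fin n)) (hpicky : IsPicky p x)
    (P : Sylow p (Equiv.Perm (Fin n))) (hx : x ∈ (P : Subgroup (Equiv.Perm (Fin n)))) :
    (∀ χ ∈ Irr (Equiv.Perm (Fin n)), ∃ m : ℤ, χ x = (m : ℂ)) ∧
    (∀ ψ ∈ Irr ↥(Subgroup.normalizer ((P : Subgroup (Equiv.Perm (Fin n))) : Set (Equiv.Perm (Fin n)))),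
      ∃ m : ℤ, ψ ⟨x, Subgroup.le_normalizer hx⟩ = (m : ℂ)) :=
  int_valued_at_picky_general p n x hpicky P hx

end
end
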